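/- Let n ≥ 1 and let d = (d_0,…,d_n) and e = (e_0,…,e_n) be degree sequences with entries in ℤ ∪ {∞}. Fix an index i with 0 ≤ i < n such that d_i = e_i and d_{i+1} = e_{i+1} are both finite. If d_k ≤ e_k for every k and d ≠ e, then β_i(π_d)/β_{i+1}(π_d) < β_i(π_e)/β_{i+1}(π_e); equivalently, β_i(π_d)·β_{i+1}(π_e) < β_i(π_e)·β_{i+1}(π_d) as positive rational numbers. -/

import Mathlib

/-!
Put `a = d_i = e_i` and `b = d_{i+1} = e_{i+1}`. After cancelling the common factors coming
from the indices `i` and `i + 1`, both sides are products over the remaining indices `k`, and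
the factor at `k` is `1 / (|a - d_k| |b - e_k|)` on the left and `1 / (|a - e_k| |b - d_k|)` on
the right. Degree sequences increase strictly while finite, so every such `k` has
`d_k ≤ e_k < a` or `b < d_k ≤ e_k`; for `x ≤ y` on one side of `[a, b]` the identity
`(a - x)(b - y) = (a - y)(b - x) + (b - a)(y - x)` compares the factors, strictly when `x < y`.
An infinite `e_k` just drops a factor, and then `1 / |a - d_k| < 1 / |b - d_k|` suffices.
-/

open Finset

/-- The `i`-th Betti number of the pure diagram `π_d` of a degree sequence `d` with
entries in `ℤ ∪ {∞}` (modeled as `WithTop ℤ`): the product, over all indices `k ≠ i`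
with `d k` finite, of `1/|d_i - d_k|`, as a rational number. -/
def bettiTop {n : ℕ} (d : Fin (n + 1) → WithTop ℤ) (i : Fin (n + 1)) : ℚ :=
  ∏ k ∈ Finset.univ.filter (fun k => k ≠ i ∧ d k ≠ ⊤),
    (1 : ℚ) / |((((d i).untopD 0 : ℤ) : ℚ) - (((d k).untopD 0 : ℤ) : ℚ))|

lemma one_div_abs_sub_mul_lt_of_separated {K : Type*} [Field K] [LinearOrder K]
    [IsStrictOrderedRing K] {a b x y : K} (hab : a < b) (hxy : x < y) (hsep : y < a ∨ b < x) :
    1 / |a - x| * (1 / |b - y|) < 1 / |a - y| * (1 / |b - x|) := by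
  have key : (a - y) * (b - x) + (b - a) * (y - x) = (a - x) * (b - y) := by ring
  have hpos : 0 < (a - y) * (b - x) := by
    rcases hsep with h | h <;> nlinarith
  rw [one_div_mul_one_div, one_div_mul_one_div, ← abs_mul, ← abs_mul,
    abs_of_pos hpos, abs_of_pos (by nlinarith)]
  exact one_div_lt_one_div_of_lt hpos (by nlinarith)

def invDist (c : ℤ) (t : WithTop ℤ) : ℚ :=
  if t = ⊤ then 1 else 1 / |(c : ℚ) - ((t.untopD 0 : ℤ) : ℚ)|

@[simp] lemma invDist_top (c : ℤ) : invDist c ⊤ = 1 := if_pos rfl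

@[simp] lemma invDist_coe (c x : ℤ) : invDist c x = 1 / |(c : ℚ) - x| := by
  simp [invDist]

lemma invDist_pos {c : ℤ} {t : WithTop ℤ} (h : t ≠ c) : 0 < invDist c t := by
  induction t using WithTop.recTopCoe with
  | top => simp
  | coe x =>
    have : (c : ℚ) ≠ x := by exact_mod_cast fun h' => h (by rw [h'])
    simpa [sub_ne_zero] using this

section

variable {a b : ℤ} {x y : WithTop ℤ}

lemma invDist_mul_invDist_pos (hab : a < b) (hxy : x ≤ y) (hsep : y < a ∨ b < x) :
    0 < invDist a x * invDist b y := by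
  refine mul_pos (invDist_pos ?_) (invDist_pos ?_)
  all_goals rcases hsep with h | h
  · exact (hxy.trans_lt h).ne
  · exact (lt_trans (WithTop.coe_lt_coe.2 hab) h).ne'
  · exact (h.trans (WithTop.coe_lt_coe.2 hab)).ne
  · exact (h.trans_le hxy).ne'

lemma invDist_mul_invDist_lt (hab : a < b) (hxy : x < y) (hsep : y < a ∨ b < x) :
    invDist a x * invDist b y < invDist a y * invDist b x := by
  lift x to ℤ using hxy.ne_top
  induction y using WithTop.recTopCoe with
  | top =>
    obtain h | h := hsep
    · exact absurd h (by simp)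
    have hbx : (b : ℚ) < x := by exact_mod_cast WithTop.coe_lt_coe.1 h
    have hab : (a : ℚ) < b := by exact_mod_cast hab
    simp only [invDist_coe, invDist_top, mul_one, one_mul]
    rw [abs_sub_comm, abs_sub_comm (b : ℚ), abs_of_pos (by linarith), abs_of_pos (by linarith)]
    exact one_div_lt_one_div_of_lt (by linarith) (by linarith)
  | coe y =>
    simp only [invDist_coe]
    exact one_div_abs_sub_mul_lt_of_separated (by exact_mod_cast hab) (by exact_mod_cast hxy)
      (by exact_mod_cast hsep)

lemma invDist_mul_invDist_le (hab : a < b) (hxy : x ≤ y) (hsep : y < a ∨ b < x) :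
    invDist a x * invDist b y ≤ invDist a y * invDist b x := by
  obtain hxy | rfl := hxy.lt_or_eq
  · exact (invDist_mul_invDist_lt hab hxy hsep).le
  · exact le_rfl

end

lemma bettiTop_eq_prod_erase {n : ℕ} (d : Fin (n + 1) → WithTop ℤ) {i : Fin (n + 1)} {c : ℤ}
    (hc : d i = c) : bettiTop d i = ∏ k ∈ univ.erase i, invDist c (d k) := by
  rw [bettiTop, hc, WithTop.untopD_coe, prod_filter, ← mul_prod_erase univ _ (mem_univ i)]
  simp only [ne_eq, not_true_eq_false, false_and, if_false, one_mul]
  refine prod_congr rfl fun k hk => ?_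
  rw [if_congr (and_iff_right (ne_of_mem_erase hk)) rfl rfl, invDist]
  split_ifs <;> rfl

lemma bettiTop_mul_bettiTop_eq {n : ℕ} (f g : Fin (n + 1) → WithTop ℤ) {i j : Fin (n + 1)}
    (hij : i ≠ j) {a b : ℤ} (ha : f i = a) (hb : g j = b) :
    bettiTop f i * bettiTop g j = invDist a (f j) * invDist b (g i) *
      ∏ k ∈ (univ.erase i).erase j, invDist a (f k) * invDist b (g k) := by
  rw [bettiTop_eq_prod_erase f ha, bettiTop_eq_prod_erase g hb,
    ← mul_prod_erase _ _ (mem_erase.2 ⟨hij.symm, mem_univ j⟩),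
    ← mul_prod_erase _ _ (mem_erase.2 ⟨hij, mem_univ i⟩), erase_right_comm, prod_mul_distrib]
  ring

def IsDegreeSeq {n : ℕ} (d : Fin (n + 1) → WithTop ℤ) : Prop :=
  ∀ k : Fin n, d k.castSucc + 1 ≤ d k.succ

namespace IsDegreeSeq

variable {n : ℕ} {d : Fin (n + 1) → WithTop ℤ}

lemma monotone (hd : IsDegreeSeq d) : Monotone d :=
  Fin.monotone_iff_le_succ.2 fun k => le_add_of_nonneg_right zero_le_one |>.trans (hd k)

lemma apply_ne_top_of_le (hd : IsDegreeSeq d) {j k : Fin (n + 1)} (hjk : j ≤ k)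
    (hk : d k ≠ ⊤) : d j ≠ ⊤ :=
  ne_top_of_le_ne_top hk (hd.monotone hjk)

lemma apply_lt_apply_of_ne_top (hd : IsDegreeSeq d) {j k : Fin (n + 1)} (hjk : j < k)
    (hj : d j ≠ ⊤) : d j < d k := by
  obtain ⟨j, rfl⟩ := Fin.exists_castSucc_eq.2 (Fin.ne_last_of_lt hjk)
  lift d j.castSucc to ℤ using hj with x hx
  calc (x : WithTop ℤ) < x + 1 := by exact_mod_cast lt_add_one x
    _ ≤ d j.succ := hx ▸ hd j
    _ ≤ d k := hd.monotone (Fin.castSucc_lt_iff_succ_le.1 hjk)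

end IsDegreeSeq

theorem bettiTop_castSucc_mul_bettiTop_succ_lt {n : ℕ} {d e : Fin (n + 1) → WithTop ℤ}
    (hd : IsDegreeSeq d) (he : IsDegreeSeq e) (i : Fin n)
    (hdei : d i.castSucc = e i.castSucc) (hdei1 : d i.succ = e i.succ) (hfin1 : d i.succ ≠ ⊤)
    (hle : d ≤ e) (hne : d ≠ e) :
    bettiTop d i.castSucc * bettiTop e i.succ < bettiTop e i.castSucc * bettiTop d i.succ := by
  have hi : i.castSucc < i.succ := Fin.castSucc_lt_succ
  obtain ⟨b, hdb⟩ := WithTop.ne_top_iff_exists.1 hfin1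
  obtain ⟨a, hda⟩ := WithTop.ne_top_iff_exists.1 (hd.apply_ne_top_of_le hi.le hfin1)
  have hab : a < b := WithTop.coe_lt_coe.1 <|
    hda ▸ hdb ▸ hd.apply_lt_apply_of_ne_top hi (hda ▸ WithTop.coe_ne_top)
  have hsep : ∀ k ∈ (univ.erase i.castSucc).erase i.succ, e k < a ∨ b < d k := by
    intro k hk
    obtain ⟨hk1, hk0⟩ : k ≠ i.succ ∧ k ≠ i.castSucc := by simpa using hk
    rcases lt_or_gt_of_ne hk0 with hlt | hgt
    · left
      rw [hda, hdei]
      exact he.apply_lt_apply_of_ne_top hlt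
        (he.apply_ne_top_of_le hlt.le (hdei ▸ hda ▸ WithTop.coe_ne_top))
    · right
      rw [hdb]
      exact hd.apply_lt_apply_of_ne_top
        (Fin.castSucc_lt_iff_succ_le.1 hgt |>.lt_of_ne' hk1) hfin1
  obtain ⟨k, hk⟩ := Function.ne_iff.1 hne
  have hk_mem : k ∈ (univ.erase i.castSucc).erase i.succ := by
    simp only [mem_erase, mem_univ, and_true]
    exact ⟨fun h => hk (h ▸ hdei1), fun h => hk (h ▸ hdei)⟩
  rw [bettiTop_mul_bettiTop_eq d e hi.ne hda.symm (hdei1 ▸ hdb).symm,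
    bettiTop_mul_bettiTop_eq e d hi.ne (hdei ▸ hda).symm hdb.symm,
    ← hdei1, ← hdei, ← hdb, ← hda]
  refine mul_lt_mul_of_pos_left
    (prod_lt_prod (fun k hk => ?_) (fun k hk => ?_) ⟨k, hk_mem, ?_⟩)
    (mul_pos (invDist_pos ?_) (invDist_pos ?_))
  · exact invDist_mul_invDist_pos hab (hle k) (hsep k hk)
  · exact invDist_mul_invDist_le hab (hle k) (hsep k hk)
  · exact invDist_mul_invDist_lt hab ((hle k).lt_of_ne hk) (hsep k hk_mem)
  · exact WithTop.coe_injective.ne hab.ne'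
  · exact WithTop.coe_injective.ne hab.ne

/-- **Monotonicity Principle** (for degree sequences with possibly infinite entries).
If `d` and `e` are degree sequences of length `n + 1` agreeing in the (finite) positions
`i` and `i + 1`, with `d_k ≤ e_k` for all `k` and `d ≠ e`, then
`β_i(π_d)/β_{i+1}(π_d) < β_i(π_e)/β_{i+1}(π_e)`, i.e. cross-multiplying,
`β_i(π_d)·β_{i+1}(π_e) < β_i(π_e)·β_{i+1}(π_d)`. -/
theorem monotonicity_principle_withTop {n : ℕ}
    (d e : Fin (n + 1) → WithTop ℤ)
    (hd : ∀ k : ℕ, (hk : k + 1 ≤ n) → d ⟨k, by omega⟩ + 1 ≤ d ⟨k + 1, by omega⟩)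
    (he : ∀ k : ℕ, (hk : k + 1 ≤ n) → e ⟨k, by omega⟩ + 1 ≤ e ⟨k + 1, by omega⟩)
    (i : ℕ) (hi : i < n)
    (hdei : d ⟨i, by omega⟩ = e ⟨i, by omega⟩)
    (hdei1 : d ⟨i + 1, by omega⟩ = e ⟨i + 1, by omega⟩)
    (hfin1 : d ⟨i + 1, by omega⟩ ≠ ⊤)
    (hle : ∀ k, d k ≤ e k) (hne : d ≠ e) :
    bettiTop d ⟨i, by omega⟩ * bettiTop e ⟨i + 1, by omega⟩ <
      bettiTop e ⟨i, by omega⟩ * bettiTop d ⟨i + 1, by omega⟩ :=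
  bettiTop_castSucc_mul_bettiTop_succ_lt (fun k => hd k k.isLt) (fun k => he k k.isLt) ⟨i, hi⟩
    hdei hdei1 hfin1 hle hne
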